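/- arXiv:2005.08303 — 3 statements merged into one kernel-verified Lean document; each statement's English description precedes it below -/
import Mathlib

section
/- Let (R, m) be a commutative local ring and let a_• and b_• be two decreasing graded sequences of m-primary ideals of R (so a_i · a_j ⊆ a_{i+j}, a_{i+1} ⊆ a_i, and each a_i contains a power of m; similarly for b_•). Fix m ∈ ℕ and suppose R/a_m is a finite-dimensional vector space over the residue field k = R/m. Then there exist f_1, ..., f_N ∈ R whose images in R/a_m form a k-basis, such that the family {f_1,...,f_N} is compatible with both a_• and b_•: for every r ∈ ℕ, the nonzero images of the f_i in R/a_r are linearly independent over k. -/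
/-!
Fix a `K`-linear section `s` of `R → R ⧸ a m₀`. The kernels of the composites
`R ⧸ a m₀ → R → R ⧸ a r` and `R ⧸ a m₀ → R → R ⧸ b r` form two chains of subspaces, and if a basis
is adapted to all of them (each kernel is spanned by the basis vectors it contains), its lifts by
`s` are compatible with both sequences. Two chains of subspaces of a finite-dimensional space
always admit a common adapted basis: take `x ≠ 0` in the smallest nonzero member of the first
chain, an adapted basis of `V ⧸ K ∙ x` by induction on the dimension, and lift each of its vectors
into the smallest member of the second chain whose image contains it; together with `x`, these
lifts are the basis.
-/

open Module Submodule

theorem IsChain.exists_forall_le_of_wellFoundedLT {α : Type*} [PartialOrder α] [WellFoundedLT α]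
    {s : Set α} (hs : IsChain (· ≤ ·) s) {p : α → Prop} (h : ∃ x ∈ s, p x) :
    ∃ x ∈ s, p x ∧ ∀ y ∈ s, p y → x ≤ y := by
  obtain ⟨x, ⟨hxs, hpx⟩, hmin⟩ := wellFounded_lt.has_min {x | x ∈ s ∧ p x} h
  refine ⟨x, hxs, hpx, fun y hys hpy => ?_⟩
  exact (hs.total hxs hys).elim id fun hyx => (eq_of_le_of_not_lt hyx (hmin y ⟨hys, hpy⟩)).ge

section Ring

variable {R M N : Type*} [Ring R] [AddCommGroup M] [Module R M] [AddCommGroup N] [Module R N]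

def Module.Basis.IsAdaptedTo {ι : Type*} (b : Basis ι R M) (W : Submodule R M) : Prop :=
  W ≤ span R (b '' {i | b i ∈ W})

theorem Module.Basis.linearIndependent_map_of_isAdaptedTo_ker {ι : Type*} (b : Basis ι R M)
    (φ : M →ₗ[R] N) (h : b.IsAdaptedTo (LinearMap.ker φ)) :
    LinearIndependent R (fun i : {i // φ (b i) ≠ 0} => φ (b i)) := by
  have hdisj : Disjoint (span R (b '' {i | φ (b i) ≠ 0})) (LinearMap.ker φ) :=
    (b.linearIndependent.disjoint_span_image disjoint_compl_left).mono_right h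
  rw [Set.image_eq_range] at hdisj
  exact (b.linearIndependent.comp _ Subtype.val_injective).map hdisj

variable [IsArtinian R M]

theorem exists_ne_zero_forall_mem_of_isChain [Nontrivial M] {S : Set (Submodule R M)}
    (hS : IsChain (· ≤ ·) S) : ∃ x ≠ (0 : M), ∀ W ∈ S, W ≠ ⊥ → x ∈ W := by
  by_cases h : ∃ W ∈ S, W ≠ ⊥
  · obtain ⟨W₀, -, hW₀, hle⟩ := hS.exists_forall_le_of_wellFoundedLT h
    obtain ⟨x, hx, hx0⟩ := W₀.ne_bot_iff.mp hW₀
    exact ⟨x, hx0, fun W hW hW0 => hle W hW hW0 hx⟩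
  · push Not at h
    obtain ⟨x, hx⟩ := exists_ne (0 : M)
    exact ⟨x, hx, fun W hW hW0 => absurd (h W hW) hW0⟩

theorem exists_lift_forall_mem_of_isChain {T : Set (Submodule R M)} (hT : IsChain (· ≤ ·) T)
    {f : M →ₗ[R] N} (hf : Function.Surjective f) (z : N) :
    ∃ y, f y = z ∧ ∀ W ∈ T, z ∈ W.map f → y ∈ W := by
  by_cases h : ∃ W ∈ T, z ∈ W.map f
  · obtain ⟨W₀, -, ⟨y, hy, rfl⟩, hle⟩ := hT.exists_forall_le_of_wellFoundedLT h
    exact ⟨y, rfl, fun W hW hzW => hle W hW hzW hy⟩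
  · push Not at h
    obtain ⟨y, rfl⟩ := hf z
    exact ⟨y, rfl, fun W hW hzW => absurd hzW (h W hW)⟩

end Ring

theorem isChain_range_ker_mkₐ_comp {ι K R V : Type*} [LinearOrder ι] [CommRing K] [CommRing R]
    [Algebra K R] [AddCommGroup V] [Module K V] (sec : V →ₗ[K] R) {a : ι → Ideal R}
    (ha : Antitone a) :
    IsChain (· ≤ ·)
      (Set.range fun r => LinearMap.ker ((Ideal.Quotient.mkₐ K (a r)).toLinearMap ∘ₗ sec)) := by
  refine Antitone.isChain_range fun r s hrs v hv => ?_
  simp only [LinearMap.mem_ker, LinearMap.comp_apply, AlgHom.toLinearMap_apply,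
    Ideal.Quotient.mkₐ_eq_mk, Ideal.Quotient.eq_zero_iff_mem] at hv ⊢
  exact ha hrs hv

section DivisionRing

variable {K V : Type*} [DivisionRing K] [AddCommGroup V] [Module K V]

theorem exists_basis_finCons_of_mkQ [FiniteDimensional K V] {x : V} (hx : x ≠ 0) {n : ℕ}
    (b' : Basis (Fin n) K (V ⧸ K ∙ x)) {v : Fin n → V} (hv : ∀ k, (K ∙ x).mkQ (v k) = b' k) :
    ∃ b : Basis (Fin (n + 1)) K V, ⇑b = Fin.cons x v := by
  have hqv : (K ∙ x).mkQ ∘ v = b' := funext hv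
  have hli : LinearIndependent K ((K ∙ x).mkQ ∘ v) := hqv ▸ b'.linearIndependent
  have hxv : x ∉ span K (Set.range v) := fun hxv =>
    hx <| (disjoint_iff_inf_le.mp (range_ker_disjoint hli))
      ⟨hxv, by rw [ker_mkQ]; exact mem_span_singleton_self x⟩
  have hcard : Fintype.card (Fin (n + 1)) = finrank K V := by
    rw [Fintype.card_fin, ← finrank_quotient_add_finrank (K ∙ x), finrank_span_singleton hx,
      finrank_eq_card_basis b', Fintype.card_fin]
  exact ⟨basisOfLinearIndependentOfCardEqFinrank
    (linearIndependent_finCons.mpr ⟨hli.of_comp _, hxv⟩) hcard,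
    coe_basisOfLinearIndependentOfCardEqFinrank _ _⟩

theorem Module.Basis.isAdaptedTo_of_mkQ {x : V} {n : ℕ} (b : Basis (Fin (n + 1)) K V)
    (hb0 : b 0 = x) (b' : Basis (Fin n) K (V ⧸ K ∙ x)) (hb : ∀ k, (K ∙ x).mkQ (b k.succ) = b' k)
    {W : Submodule K V} (hW : b'.IsAdaptedTo (W.map (K ∙ x).mkQ))
    (hlift : ∀ k, b' k ∈ W.map (K ∙ x).mkQ → b k.succ ∈ W) : b.IsAdaptedTo W := by
  set P := span K (b '' {i | b i ∈ W})
  have hPW : P ≤ W := span_le.mpr (Set.image_subset_iff.mpr fun _ hi => hi)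
  have hmap : W.map (K ∙ x).mkQ ≤ P.map (K ∙ x).mkQ := by
    refine hW.trans ?_
    rw [map_span]
    refine span_mono ?_
    rintro _ ⟨k, hk, rfl⟩
    exact ⟨b k.succ, ⟨k.succ, hlift k hk, rfl⟩, hb k⟩
  have hker : (K ∙ x) ⊓ W ≤ P := by
    by_cases hxW : x ∈ W
    · exact inf_le_left.trans (span_singleton_le_iff_mem _ _ |>.mpr
        (subset_span ⟨0, by rwa [Set.mem_ofPred_eq, hb0], hb0⟩))
    · rw [inf_comm, (disjoint_span_singleton.mpr fun h => absurd h hxW).eq_bot]; exact bot_le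
  have hWP := (LinearMap.map_le_map_iff _).mp hmap
  rw [ker_mkQ] at hWP
  calc W ≤ (P ⊔ K ∙ x) ⊓ W := le_inf hWP le_rfl
    _ = P ⊔ (K ∙ x) ⊓ W := sup_inf_assoc_of_le _ hPW
    _ ≤ P := sup_le le_rfl hker

theorem exists_basis_isAdaptedTo_of_isChain [FiniteDimensional K V] {S T : Set (Submodule K V)}
    (hS : IsChain (· ≤ ·) S) (hT : IsChain (· ≤ ·) T) :
    ∃ (n : ℕ) (b : Basis (Fin n) K V), (∀ W ∈ S, b.IsAdaptedTo W) ∧ ∀ W ∈ T, b.IsAdaptedTo W := by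
  induction hn : finrank K V generalizing V with
  | zero =>
    have : Subsingleton V := finrank_zero_iff.mp hn
    have hbot : ∀ W : Submodule K V, (Basis.empty V : Basis (Fin 0) K V).IsAdaptedTo W :=
      fun W => (eq_bot_of_subsingleton (p := W)).le.trans bot_le
    exact ⟨0, Basis.empty V, fun W _ => hbot W, fun W _ => hbot W⟩
  | succ n ih =>
    have : Nontrivial V := finrank_pos_iff (R := K).mp (by omega)
    obtain ⟨x, hx0, hxS⟩ := exists_ne_zero_forall_mem_of_isChain hS
    set q := (K ∙ x).mkQ
    have hq : Monotone (map q) := fun _ _ => map_mono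
    have hnq : finrank K (V ⧸ K ∙ x) = n := by
      have := finrank_quotient_add_finrank (K ∙ x)
      rw [finrank_span_singleton hx0] at this
      omega
    obtain ⟨m, b', hb'S, hb'T⟩ := ih (hq.isChain_image hS) (hq.isChain_image hT) hnq
    choose v hv hvT using fun k => exists_lift_forall_mem_of_isChain hT (mkQ_surjective _) (b' k)
    obtain ⟨b, hb⟩ := exists_basis_finCons_of_mkQ hx0 b' hv
    have hb0 : b 0 = x := by rw [hb, Fin.cons_zero]
    have hbsucc : ∀ k, q (b k.succ) = b' k := fun k => by rw [hb, Fin.cons_succ, hv]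
    refine ⟨m + 1, b, fun W hW => ?_, fun W hW => ?_⟩
    · refine b.isAdaptedTo_of_mkQ hb0 b' hbsucc (hb'S _ ⟨W, hW, rfl⟩) fun k hk => ?_
      -- a nonzero member of `S` contains `x`, hence the whole fibre of `q` over each of its points
      have hxW : x ∈ W := hxS W hW <| by
        rintro rfl
        exact b'.ne_zero k (by simpa using hk)
      have hkerW : LinearMap.ker q ≤ W := by rwa [ker_mkQ, span_singleton_le_iff_mem]
      rw [← hbsucc, ← mem_comap, comap_map_eq, sup_eq_left.mpr hkerW] at hk
      exact hk
    · refine b.isAdaptedTo_of_mkQ hb0 b' hbsucc (hb'T _ ⟨W, hW, rfl⟩) fun k hk => ?_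
      rw [hb, Fin.cons_succ]
      exact hvT k W hW hk

end DivisionRing

theorem compatible_basis_two_graded_sequences_general
    (K R : Type*) [Field K] [CommRing R] [Algebra K R]
    (a b : ℕ → Ideal R)
    (hadec : ∀ i, a (i + 1) ≤ a i) (hbdec : ∀ i, b (i + 1) ≤ b i)
    (m₀ : ℕ) [FiniteDimensional K (R ⧸ a m₀)] :
    ∃ (N : ℕ) (f : Fin N → R)
      (bas : Basis (Fin N) K (R ⧸ a m₀)),
      (∀ i, bas i = Ideal.Quotient.mk (a m₀) (f i)) ∧
      (∀ r : ℕ, LinearIndependent K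
        (fun i : {i : Fin N // Ideal.Quotient.mk (a r) (f i) ≠ 0} =>
          Ideal.Quotient.mk (a r) (f i.1))) ∧
      (∀ r : ℕ, LinearIndependent K
        (fun i : {i : Fin N // Ideal.Quotient.mk (b r) (f i) ≠ 0} =>
          Ideal.Quotient.mk (b r) (f i.1))) := by
  obtain ⟨sec, hsec⟩ :=
    (Ideal.Quotient.mkₐ K (a m₀)).toLinearMap.exists_rightInverse_of_surjective
      (LinearMap.range_eq_top.mpr Ideal.Quotient.mk_surjective)
  obtain ⟨N, bas, hadapt_a, hadapt_b⟩ := exists_basis_isAdaptedTo_of_isChain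
    (isChain_range_ker_mkₐ_comp sec (antitone_nat_of_succ_le hadec))
    (isChain_range_ker_mkₐ_comp sec (antitone_nat_of_succ_le hbdec))
  refine ⟨N, fun i => sec (bas i), bas, fun i => (LinearMap.congr_fun hsec (bas i)).symm,
    fun r => ?_, fun r => ?_⟩
  · exact bas.linearIndependent_map_of_isAdaptedTo_ker _ (hadapt_a _ ⟨r, rfl⟩)
  · exact bas.linearIndependent_map_of_isAdaptedTo_ker _ (hadapt_b _ ⟨r, rfl⟩)

/-- Lemma 2.1: given two decreasing graded sequences of m-primary ideals in a local
algebra over a field `K` (the coefficient field, isomorphic to the residue field),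
there is a basis of `R/a_{m₀}` compatible with both sequences, i.e. lifts `f i` whose
nonzero images in every `R/a_r` and `R/b_r` are linearly independent. -/
theorem compatible_basis_two_graded_sequences
    (K R : Type*) [Field K] [CommRing R] [Algebra K R] [IsLocalRing R]
    (hres : Function.Bijective (algebraMap K (R ⧸ IsLocalRing.maximalIdeal R)))
    (a b : ℕ → Ideal R)
    (ha0 : a 0 = ⊤) (hb0 : b 0 = ⊤)
    (hagr : ∀ i j, a i * a j ≤ a (i + j)) (hbgr : ∀ i j, b i * b j ≤ b (i + j))
    (hadec : ∀ i, a (i + 1) ≤ a i) (hbdec : ∀ i, b (i + 1) ≤ b i)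
    (haprim : ∀ i, ∃ p : ℕ, (IsLocalRing.maximalIdeal R) ^ p ≤ a i)
    (hbprim : ∀ i, ∃ p : ℕ, (IsLocalRing.maximalIdeal R) ^ p ≤ b i)
    (m₀ : ℕ) [FiniteDimensional K (R ⧸ a m₀)] :
    ∃ (N : ℕ) (f : Fin N → R)
      (bas : Basis (Fin N) K (R ⧸ a m₀)),
      (∀ i, bas i = Ideal.Quotient.mk (a m₀) (f i)) ∧
      (∀ r : ℕ, LinearIndependent K
        (fun i : {i : Fin N // Ideal.Quotient.mk (a r) (f i) ≠ 0} =>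
          Ideal.Quotient.mk (a r) (f i.1))) ∧
      (∀ r : ℕ, LinearIndependent K
        (fun i : {i : Fin N // Ideal.Quotient.mk (b r) (f i) ≠ 0} =>
          Ideal.Quotient.mk (b r) (f i.1))) :=
  compatible_basis_two_graded_sequences_general K R a b hadec hbdec m₀
end

section
/- Let a_• and b_• be two graded sequences of ideals in a commutative ring R. Define c_m = Σ_{i=0}^m (a_i ∩ b_{m-i}). Then c_• is again a graded sequence of ideals, i.e., c_i · c_j ⊆ c_{i+j} for all i, j ∈ ℕ. -/
/-!
A product of a summand `a p ⊓ b q` of `c i` with a summand `a p' ⊓ b q'` of `c j` lies in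
`a (p + p') ⊓ b (q + q')` because each sequence is graded, and this is a summand of `c (i + j)`.
Indexing the summands by antidiagonals `p + q = m` avoids the truncated subtraction `m - i`.
-/

open Finset.HasAntidiagonal

namespace Ideal

variable {R : Type*} [CommSemiring R]

def boxSum (a b : ℕ → Ideal R) (m : ℕ) : Ideal R :=
  ∑ pq ∈ antidiagonal m, a pq.1 ⊓ b pq.2

theorem boxSum_eq_sum_range (a b : ℕ → Ideal R) (m : ℕ) :
    boxSum a b m = ∑ i ∈ Finset.range (m + 1), a i ⊓ b (m - i) :=
  Finset.Nat.sum_antidiagonal_eq_sum_range_succ_mk _ m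

theorem boxSum_zero (a b : ℕ → Ideal R) : boxSum a b 0 = a 0 ⊓ b 0 := by
  simp [boxSum]

theorem inf_mul_inf_le_mul_inf_mul (I J K L : Ideal R) : (I ⊓ J) * (K ⊓ L) ≤ I * K ⊓ J * L :=
  le_inf (mul_mono inf_le_left inf_le_left) (mul_mono inf_le_right inf_le_right)

theorem inf_le_boxSum (a b : ℕ → Ideal R) {p q : ℕ} : a p ⊓ b q ≤ boxSum a b (p + q) :=
  Finset.single_le_sum (a := (p, q)) (f := fun pq : ℕ × ℕ => a pq.1 ⊓ b pq.2) (fun _ _ => bot_le)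
    (mem_antidiagonal.mpr rfl)

theorem boxSum_mul_le {a b : ℕ → Ideal R} (ha : ∀ i j, a i * a j ≤ a (i + j))
    (hb : ∀ i j, b i * b j ≤ b (i + j)) (i j : ℕ) :
    boxSum a b i * boxSum a b j ≤ boxSum a b (i + j) := by
  rw [boxSum, boxSum, Finset.sum_mul_sum, sum_eq_sup]
  refine Finset.sup_le fun x hx => ?_
  rw [sum_eq_sup]
  refine Finset.sup_le fun y hy => ?_
  have hxy : x.1 + y.1 + (x.2 + y.2) = i + j := by
    rw [mem_antidiagonal] at hx hy
    omega
  calc (a x.1 ⊓ b x.2) * (a y.1 ⊓ b y.2)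
      ≤ a (x.1 + y.1) ⊓ b (x.2 + y.2) :=
        (inf_mul_inf_le_mul_inf_mul _ _ _ _).trans (inf_le_inf (ha _ _) (hb _ _))
    _ ≤ boxSum a b (i + j) := hxy ▸ inf_le_boxSum a b

end Ideal

/-- The box-sum `c_m = Σ_{i=0}^m (a_i ⊓ b_{m-i})` of two graded sequences of ideals is
again a graded sequence of ideals. -/
theorem boxsum_graded (R : Type*) [CommRing R] (a b : ℕ → Ideal R)
    (ha0 : a 0 = ⊤) (hb0 : b 0 = ⊤)
    (hagr : ∀ i j, a i * a j ≤ a (i + j)) (hbgr : ∀ i j, b i * b j ≤ b (i + j))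
    (c : ℕ → Ideal R)
    (hc : ∀ m, c m = ∑ i ∈ Finset.range (m + 1), a i ⊓ b (m - i)) :
    c 0 = ⊤ ∧ ∀ i j, c i * c j ≤ c (i + j) := by
  obtain rfl : c = Ideal.boxSum a b :=
    funext fun m => (hc m).trans (Ideal.boxSum_eq_sum_range a b m).symm
  refine ⟨?_, Ideal.boxSum_mul_le hagr hbgr⟩
  rw [Ideal.boxSum_zero, ha0, hb0, inf_top_eq]
end

section
/- Let v_0, v_1 be valuations on a Noetherian local ring (R,m) centered at m, with valuation ideals a_r(v_i) of finite colength. Set b_r = a_r(v_0) ∩ a_r(v_1) and assume the multiplicities mult(v_0) = lim ℓ(R/a_r(v_0))/(r^n/n!), mult(v_1), and mult(b_•) = lim ℓ(R/b_r)/(r^n/n!) all exist. If mult(v_0) = mult(v_1) = mult(b_•) > 0, and if there exist f with v_0(f) > v_1(f) and g with v_1(g) > v_0(g) > 0, then one reaches a contradiction: (ℓ_0+1)^n(mult(b_•)−mult(v_0)) + (ℓ_2+2)^n(mult(b_•)−mult(v_1)) ≥ (2^n−1)·mult(b_•) > 0 for suitable ℓ_0, ℓ_2, which is impossible. Hence v_0(f)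 = v_1(f) for all f ∈ R whenever also every pair of values can be compared (i.e., v_0 = v_1). -/
/-! If `v₀ ≠ v₁`, [LX20] provides `h` with `0 < v₁ h < v₀ h` (up to swapping the valuations), and
after replacing `h` by a power, `v₁ h ≤ q < q + 1 ≤ v₀ h` for some `q : ℕ`. For `b = b_{(q+1)r}`,
`ℓ(R/b) = ℓ(R/(b + h^r R)) + ℓ(R/(b : h^r))`, where `b + h^r R ⊆ a_{(q+1)r}(v₀)` and
`(b : h^r) ⊆ a_r(v₁)`. Hence `ℓ(R/a_{(q+1)r}(v₀)) + ℓ(R/a_r(v₁)) ≤ ℓ(R/b_{(q+1)r})`, and dividing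
by `((q+1)r)^n/n!` and letting `r → ∞` gives `M + M/(q+1)^n ≤ M`, contradicting `M > 0`. -/

open Module Filter

section ColengthOfIdeals

variable {K R : Type*} [Field K] [CommRing R] [Algebra K R]

theorem finiteDimensional_quotient_of_le {I J : Ideal R} (h : J ≤ I)
    [FiniteDimensional K (R ⧸ J)] : FiniteDimensional K (R ⧸ I) :=
  Module.Finite.of_surjective (Ideal.Quotient.factorₐ K h).toLinearMap
    (Ideal.Quotient.factor_surjective h)

theorem finrank_quotient_le_of_le {I J : Ideal R} (h : J ≤ I) [FiniteDimensional K (R ⧸ J)] :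
    finrank K (R ⧸ I) ≤ finrank K (R ⧸ J) :=
  LinearMap.finrank_le_finrank_of_surjective (f := (Ideal.Quotient.factorₐ K h).toLinearMap)
    (Ideal.Quotient.factor_surjective h)

theorem finrank_quotient_sup_span_add_finrank_quotient_colon (b : Ideal R) (z : R)
    [FiniteDimensional K (R ⧸ b)] :
    finrank K (R ⧸ (b ⊔ Ideal.span {z})) + finrank K (R ⧸ b.colon {z}) = finrank K (R ⧸ b) := by
  let φ : R →ₗ[K] R ⧸ b := (Ideal.Quotient.mkₐ K b).toLinearMap ∘ₗ LinearMap.mulLeft K z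
  have hker : LinearMap.ker φ = (b.colon {z}).restrictScalars K := by
    ext x
    simp [φ, Submodule.mem_colon_singleton, mul_comm, Ideal.Quotient.eq_zero_iff_mem, -map_mul]
  have hrange : LinearMap.range φ =
      ((Ideal.span {z}).map (Ideal.Quotient.mkₐ K b)).restrictScalars K := by
    ext y
    obtain ⟨x, rfl⟩ := Ideal.Quotient.mk_surjective y
    simp [φ, Ideal.map_span, Ideal.mem_span_singleton', Ideal.Quotient.mk_surjective.exists,
      mul_comm]
  have hcolon : finrank K (R ⧸ b.colon {z}) = finrank K (LinearMap.range φ) :=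
    ((Submodule.Quotient.restrictScalarsEquiv K _).symm ≪≫ₗ
      Submodule.quotEquivOfEq _ _ hker.symm ≪≫ₗ φ.quotKerEquivRange).finrank_eq
  have hsup : finrank K ((R ⧸ b) ⧸ LinearMap.range φ) = finrank K (R ⧸ (b ⊔ Ideal.span {z})) :=
    (Submodule.quotEquivOfEq _ _ hrange ≪≫ₗ Submodule.Quotient.restrictScalarsEquiv K _ ≪≫ₗ
      (DoubleQuot.quotQuotEquivQuotSupₐ K b (Ideal.span {z})).toLinearEquiv).finrank_eq
  rw [hcolon, ← hsup, Submodule.finrank_quotient_add_finrank]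

theorem finrank_quotient_add_finrank_quotient_le {b I J : Ideal R} [FiniteDimensional K (R ⧸ b)]
    {z : R} (hbI : b ≤ I) (hzI : z ∈ I) (hJ : b.colon {z} ≤ J) :
    finrank K (R ⧸ I) + finrank K (R ⧸ J) ≤ finrank K (R ⧸ b) := by
  have hb_colon : b ≤ b.colon {z} := fun x hx ↦
    Submodule.mem_colon_singleton.mpr (b.mul_mem_right z hx)
  have := finiteDimensional_quotient_of_le (K := K) (le_sup_left : b ≤ b ⊔ Ideal.span {z})
  have := finiteDimensional_quotient_of_le (K := K) hb_colon
  rw [← finrank_quotient_sup_span_add_finrank_quotient_colon b z]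
  have hsup : b ⊔ Ideal.span {z} ≤ I := sup_le hbI ((Ideal.span_singleton_le_iff_mem _).mpr hzI)
  exact add_le_add (finrank_quotient_le_of_le hsup) (finrank_quotient_le_of_le hJ)

end ColengthOfIdeals

theorem map_pow_eq_nsmul {R Γ : Type*} [Monoid R] [AddMonoid Γ] {v : R → Γ}
    (hv : ∀ x y, v (x * y) = v x + v y) (x : R) {m : ℕ} (hm : m ≠ 0) :
    v (x ^ m) = m • v x := by
  induction m, Nat.one_le_iff_ne_zero.mpr hm using Nat.le_induction with
  | base => simp
  | succ k hk ih => rw [pow_succ, hv, ih (by omega), succ_nsmul]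

section MultiplicativeMaps

variable {R : Type*} {v : R → EReal}

theorem natCast_mul_le_map_pow [Monoid R] (hv : ∀ x y, v (x * y) = v x + v y)
    {z : R} {p : ℕ} (hz : (p : EReal) ≤ v z) {r : ℕ} (hr : r ≠ 0) :
    ((p * r : ℕ) : EReal) ≤ v (z ^ r) := by
  rw [map_pow_eq_nsmul hv z hr]
  calc ((p * r : ℕ) : EReal) = r • (p : EReal) := by simp [mul_comm]
    _ ≤ r • v z := nsmul_le_nsmul_right hz r

theorem map_pow_le_natCast_mul [Monoid R] (hv : ∀ x y, v (x * y) = v x + v y)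
    {z : R} {p : ℕ} (hz : v z ≤ p) {r : ℕ} (hr : r ≠ 0) : v (z ^ r) ≤ ((p * r : ℕ) : EReal) := by
  rw [map_pow_eq_nsmul hv z hr]
  calc r • v z ≤ r • (p : EReal) := nsmul_le_nsmul_right hz r
    _ = ((p * r : ℕ) : EReal) := by simp [mul_comm]

theorem natCast_le_of_natCast_add_le_map_mul [Mul R] (hv : ∀ x y, v (x * y) = v x + v y)
    {x z : R} {p r : ℕ} (hz : v z ≤ p) (h : ((p + r : ℕ) : EReal) ≤ v (x * z)) :
    (r : EReal) ≤ v x := by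
  rw [hv] at h
  have := h.trans (add_le_add_right hz (v x))
  rw [Nat.cast_add, add_comm, ← EReal.coe_coe_eq_natCast p] at this
  exact (EReal.addLECancellable_coe p).add_le_add_iff_right.mp this

theorem colon_le_of_map_le_natCast [Semiring R] (hv : ∀ x y, v (x * y) = v x + v y)
    {A : ℕ → Ideal R} (hA : ∀ r g, g ∈ A r ↔ (r : EReal) ≤ v g) {z : R} {p : ℕ} (hz : v z ≤ p)
    (r : ℕ) :
    (A (p + r)).colon {z} ≤ A r := fun x hx ↦
  (hA r x).mpr <| natCast_le_of_natCast_add_le_map_mul hv hz <|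
    (hA _ _).mp (Submodule.mem_colon_singleton.mp hx)

end MultiplicativeMaps

theorem EReal.exists_nsmul_le_natCast_add_one_le_nsmul {a b : EReal} (hb : 0 < b) (hba : b < a) :
    ∃ N ≠ 0, ∃ q : ℕ, N • b ≤ q ∧ ((q + 1 : ℕ) : EReal) ≤ N • a := by
  obtain ⟨c, hbc, hca⟩ := EReal.lt_iff_exists_real_btwn.mp hba
  lift b to ℝ using ⟨hba.ne_top, hb.ne_bot⟩ with β
  have hβ : 0 < β := EReal.coe_pos.mp hb
  have hβc : β < c := EReal.coe_lt_coe_iff.mp hbc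
  obtain ⟨N, hN⟩ := exists_nat_gt (2 / (c - β))
  have hN2 : 2 < N * (c - β) := (div_lt_iff₀ (by linarith)).mp hN
  refine ⟨N, by rintro rfl; simp at hN2; linarith, ⌈N * β⌉₊, ?_, ?_⟩
  · rw [← EReal.coe_nsmul, ← EReal.coe_coe_eq_natCast, EReal.coe_le_coe_iff]
    simpa using Nat.le_ceil ((N : ℝ) * β)
  · calc ((⌈N * β⌉₊ + 1 : ℕ) : EReal) ≤ (((N : ℝ) * c : ℝ) : EReal) := by
          rw [← EReal.coe_coe_eq_natCast, EReal.coe_le_coe_iff]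
          have := Nat.ceil_lt_add_one (by positivity : 0 ≤ (N : ℝ) * β)
          push_cast
          nlinarith
      _ ≤ N • a := by
          simpa using nsmul_le_nsmul_right hca.le N

theorem add_div_pow_le_of_eventually_add_le {a b d : ℕ → ℝ} {n c : ℕ} (hc : c ≠ 0) {α β δ : ℝ}
    (ha : Tendsto (fun r : ℕ => a r / (r ^ n / n.factorial)) atTop (nhds α))
    (hb : Tendsto (fun r : ℕ => b r / (r ^ n / n.factorial)) atTop (nhds β))
    (hd : Tendsto (fun r : ℕ => d r / (r ^ n / n.factorial)) atTop (nhds δ))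
    (h : ∀ᶠ r in atTop, a (c * r) + b r ≤ d (c * r)) :
    α + β / c ^ n ≤ δ := by
  have hc' : Tendsto (fun r : ℕ => c * r) atTop atTop :=
    tendsto_id.const_mul_atTop' (Nat.pos_of_ne_zero hc)
  have hb' : Tendsto (fun r : ℕ => b r / (((c * r : ℕ) : ℝ) ^ n / n.factorial)) atTop
      (nhds (β / c ^ n)) :=
    (hb.div_const _).congr fun r => by push_cast; ring
  refine le_of_tendsto_of_tendsto ((ha.comp hc').add hb') (hd.comp hc') ?_
  filter_upwards [h] with r hr
  rw [Function.comp_apply, Function.comp_apply, ← add_div]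
  exact div_le_div_of_nonneg_right hr (by positivity)

theorem not_exists_pos_lt_of_multiplicities_eq {K R : Type*} [Field K] [CommRing R] [Algebra K R]
    {n : ℕ} {v w : R → EReal} (hv : ∀ x y, v (x * y) = v x + v y)
    (hw : ∀ x y, w (x * y) = w x + w y) {A B : ℕ → Ideal R}
    (hA : ∀ r g, g ∈ A r ↔ (r : EReal) ≤ v g) (hB : ∀ r g, g ∈ B r ↔ (r : EReal) ≤ w g)
    {b : ℕ → Ideal R} (hbA : ∀ r, b r ≤ A r) (hbB : ∀ r, b r ≤ B r)
    (hfin : ∀ r, FiniteDimensional K (R ⧸ b r)) {M : ℝ} (hM : 0 < M)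
    (hmultA : Tendsto (fun r : ℕ =>
      (finrank K (R ⧸ A r) : ℝ) / (r ^ n / n.factorial)) atTop (nhds M))
    (hmultB : Tendsto (fun r : ℕ =>
      (finrank K (R ⧸ B r) : ℝ) / (r ^ n / n.factorial)) atTop (nhds M))
    (hmultb : Tendsto (fun r : ℕ =>
      (finrank K (R ⧸ b r) : ℝ) / (r ^ n / n.factorial)) atTop (nhds M)) :
    ¬ ∃ h : R, 0 < w h ∧ w h < v h := by
  rintro ⟨h, hw_pos, hwv⟩
  obtain ⟨N, hN, q, hwq, hvq⟩ := EReal.exists_nsmul_le_natCast_add_one_le_nsmul hw_pos hwv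
  rw [← map_pow_eq_nsmul hw h hN] at hwq
  rw [← map_pow_eq_nsmul hv h hN] at hvq
  have key : ∀ᶠ r in atTop, (finrank K (R ⧸ A ((q + 1) * r)) : ℝ) + finrank K (R ⧸ B r) ≤
      finrank K (R ⧸ b ((q + 1) * r)) := by
    filter_upwards [eventually_ne_atTop 0] with r hr
    have hmem : (h ^ N) ^ r ∈ A ((q + 1) * r) := (hA _ _).mpr (natCast_mul_le_map_pow hv hvq hr)
    have hcolon : (b ((q + 1) * r)).colon {(h ^ N) ^ r} ≤ B r := by
      refine (Submodule.colon_mono (hbB _) le_rfl).trans ?_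
      rw [add_one_mul]
      exact colon_le_of_map_le_natCast hw hB (map_pow_le_natCast_mul hw hwq hr) r
    have := hfin ((q + 1) * r)
    exact_mod_cast finrank_quotient_add_finrank_quotient_le (hbA _) hmem hcolon
  have := add_div_pow_le_of_eventually_add_le (Nat.succ_ne_zero q) hmultA hmultB hmultb key
  have : 0 < M / ((q + 1 : ℕ) : ℝ) ^ n := by positivity
  linarith

theorem valuations_equal_of_equal_multiplicities_general
    (K R : Type*) [Field K] [CommRing R] [Algebra K R]
    (n : ℕ)
    (v₀ v₁ : R → EReal)
    (hmul₀ : ∀ x y : R, v₀ (x * y) = v₀ x + v₀ y)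
    (hmul₁ : ∀ x y : R, v₁ (x * y) = v₁ x + v₁ y)
    (A B : ℕ → Ideal R)
    (hA : ∀ r : ℕ, ∀ g : R, g ∈ A r ↔ (r : EReal) ≤ v₀ g)
    (hB : ∀ r : ℕ, ∀ g : R, g ∈ B r ↔ (r : EReal) ≤ v₁ g)
    (hfin : ∀ r s : ℕ, FiniteDimensional K (R ⧸ (A r ⊓ B s)))
    (M : ℝ) (hM : 0 < M)
    (hmultA : Tendsto (fun r : ℕ =>
      (finrank K (R ⧸ A r) : ℝ) / (r ^ n / n.factorial)) atTop (nhds M))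
    (hmultB : Tendsto (fun r : ℕ =>
      (finrank K (R ⧸ B r) : ℝ) / (r ^ n / n.factorial)) atTop (nhds M))
    (hmultb : Tendsto (fun r : ℕ =>
      (finrank K (R ⧸ (A r ⊓ B r)) : ℝ) / (r ^ n / n.factorial)) atTop (nhds M))
    (hLX₀ : v₀ ≠ v₁ → (∃ f : R, v₁ f < v₀ f) →
      ∃ g : R, 0 < v₀ g ∧ v₀ g < v₁ g)
    (hLX₁ : v₀ ≠ v₁ → (∃ f : R, v₀ f < v₁ f) →
      ∃ g : R, 0 < v₁ g ∧ v₁ g < v₀ g) :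
    v₀ = v₁ := by
  by_contra hne
  obtain ⟨f, hf⟩ := Function.ne_iff.mp hne
  rcases hf.lt_or_gt with hlt | hlt
  · exact not_exists_pos_lt_of_multiplicities_eq hmul₀ hmul₁ hA hB (fun r ↦ inf_le_left)
      (fun r ↦ inf_le_right) (fun r ↦ hfin r r) hM hmultA hmultB hmultb (hLX₁ hne ⟨f, hlt⟩)
  · exact not_exists_pos_lt_of_multiplicities_eq hmul₁ hmul₀ hB hA (fun r ↦ inf_le_right)
      (fun r ↦ inf_le_left) (fun r ↦ hfin r r) hM hmultB hmultA hmultb (hLX₀ hne ⟨f, hlt⟩)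

/-- Lemma 3.10: two centered valuations whose volumes both equal the multiplicity of
the intersection `b_r = a_r(v₀) ∩ a_r(v₁)` of their valuation ideal sequences (all
positive) must coincide.  The auxiliary hypothesis `hLX` is [LX20, Prop. 2.7]: if the
valuations differ, there is an element on which one of them is strictly bigger while
the other is still positive (stated symmetrically). -/
theorem valuations_equal_of_equal_multiplicities
    (K R : Type*) [Field K] [CommRing R] [Algebra K R] [IsLocalRing R]
    [IsNoetherianRing R]
    (n : ℕ) (hn : 1 ≤ n)
    (v₀ v₁ : R → EReal)
    (hv₀0 : v₀ 0 = ⊤) (hv₁0 : v₁ 0 = ⊤)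
    (hadd₀ : ∀ x y : R, min (v₀ x) (v₀ y) ≤ v₀ (x + y))
    (hadd₁ : ∀ x y : R, min (v₁ x) (v₁ y) ≤ v₁ (x + y))
    (hmul₀ : ∀ x y : R, v₀ (x * y) = v₀ x + v₀ y)
    (hmul₁ : ∀ x y : R, v₁ (x * y) = v₁ x + v₁ y)
    (hcent₀ : ∀ x : R, x ∈ IsLocalRing.maximalIdeal R ↔ 0 < v₀ x)
    (hcent₁ : ∀ x : R, x ∈ IsLocalRing.maximalIdeal R ↔ 0 < v₁ x)
    (A B : ℕ → Ideal R)
    (hA : ∀ r : ℕ, ∀ g : R, g ∈ A r ↔ (r : EReal) ≤ v₀ g)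
    (hB : ∀ r : ℕ, ∀ g : R, g ∈ B r ↔ (r : EReal) ≤ v₁ g)
    (hfin : ∀ r s : ℕ, FiniteDimensional K (R ⧸ (A r ⊓ B s)))
    (M : ℝ) (hM : 0 < M)
    (hmultA : Tendsto (fun r : ℕ =>
      (finrank K (R ⧸ A r) : ℝ) / (r ^ n / n.factorial)) atTop (nhds M))
    (hmultB : Tendsto (fun r : ℕ =>
      (finrank K (R ⧸ B r) : ℝ) / (r ^ n / n.factorial)) atTop (nhds M))
    (hmultb : Tendsto (fun r : ℕ =>
      (finrank K (R ⧸ (A r ⊓ B r)) : ℝ) / (r ^ n / n.factorial)) atTop (nhds M))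
    (hLX₀ : v₀ ≠ v₁ → (∃ f : R, v₁ f < v₀ f) →
      ∃ g : R, 0 < v₀ g ∧ v₀ g < v₁ g)
    (hLX₁ : v₀ ≠ v₁ → (∃ f : R, v₀ f < v₁ f) →
      ∃ g : R, 0 < v₁ g ∧ v₁ g < v₀ g) :
    v₀ = v₁ :=
  valuations_equal_of_equal_multiplicities_general K R n v₀ v₁ hmul₀ hmul₁ A B hA hB hfin M hM
    hmultA hmultB hmultb hLX₀ hLX₁
end
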